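/- The projection Conf(R^N, k+1) → Conf(R^N, k) forgetting the last point is a continuous open surjection for N ≥ 1 (and R^N minus k points is nonempty), whose fiber over (x_1,…,x_k) is homeomorphic to R^N minus k points. -/

import Mathlib

/-- `Conf(ℝ^N, k)`: ordered configurations of `k` distinct points in `ℝ^N`. -/
def Conf (N k : ℕ) : Type :=
  {x : Fin k → EuclideanSpace ℝ (Fin N) // Function.Injective x}

noncomputable instance (N k : ℕ) : TopologicalSpace (Conf N k) :=
  inferInstanceAs (TopologicalSpace {x : Fin k → EuclideanSpace ℝ (Fin N) // Function.Injective x})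

/-- The projection forgetting the last point. -/
def confProj (N k : ℕ) (x : Conf N (k + 1)) : Conf N k :=
  ⟨fun i => x.val i.castSucc, x.prop.comp (Fin.castSucc_injective k)⟩

section Aux

variable {N k : ℕ}

abbrev EE (N : ℕ) := EuclideanSpace ℝ (Fin N)

lemma snoc_inj {f : Fin k → EE N} (hf : Function.Injective f) {y : EE N}
    (hy : ∀ i, y ≠ f i) : Function.Injective (Fin.snoc f y : Fin (k+1) → EE N) := by
  intro a b h
  induction a using Fin.lastCases with
  | last =>
    induction b using Fin.lastCases with
    | last => rfl
    | cast j => simp only [Fin.snoc_last, Fin.snoc_castSucc] at h; exact absurd h (hy j)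
  | cast i =>
    induction b using Fin.lastCases with
    | last => simp only [Fin.snoc_last, Fin.snoc_castSucc] at h; exact absurd h.symm (hy i)
    | cast j => simp only [Fin.snoc_castSucc] at h; exact congrArg Fin.castSucc (hf h)

lemma snoc_cont :
    Continuous fun p : (Fin k → EE N) × EE N => (Fin.snoc p.1 p.2 : Fin (k+1) → EE N) := by
  apply continuous_pi
  intro i
  induction i using Fin.lastCases with
  | last => simp only [Fin.snoc_last]; exact continuous_snd
  | cast j =>
    simp only [Fin.snoc_castSucc]
    exact (continuous_apply j).comp continuous_fst

lemma confProj_cont : Continuous (confProj N k) := by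
  apply Continuous.subtype_mk
  exact continuous_pi fun i => (continuous_apply _).comp continuous_subtype_val

/-- The big homeomorphism. -/
noncomputable def confHomeo (N k : ℕ) :
    Conf N (k+1) ≃ₜ {p : Conf N k × EE N // ∀ i, p.2 ≠ p.1.val i} where
  toFun x := ⟨(confProj N k x, x.val (Fin.last k)), fun i h =>
    (Fin.castSucc_lt_last i).ne' (x.prop h)⟩
  invFun p := ⟨Fin.snoc p.1.1.val p.1.2, snoc_inj p.1.1.prop p.2⟩
  left_inv x := by
    apply Subtype.ext
    exact Fin.snoc_init_self x.val
  right_inv p := by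
    apply Subtype.ext
    refine Prod.ext ?_ ?_
    · apply Subtype.ext; funext i; simp [confProj]
    · simp
  continuous_toFun := by
    apply Continuous.subtype_mk
    exact (confProj_cont).prodMk ((continuous_apply _).comp continuous_subtype_val)
  continuous_invFun := by
    apply Continuous.subtype_mk
    exact snoc_cont.comp
      ((continuous_subtype_val.comp (continuous_fst.comp (continuous_subtype_val (p := fun p : Conf N k × EE N => ∀ i, p.2 ≠ p.1.val i)))).prodMk
        (continuous_snd.comp (continuous_subtype_val (p := fun p : Conf N k × EE N => ∀ i, p.2 ≠ p.1.val i))))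

lemma W_open : IsOpen {p : Conf N k × EE N | ∀ i, p.2 ≠ p.1.val i} := by
  have : {p : Conf N k × EE N | ∀ i, p.2 ≠ p.1.val i}
      = ⋂ i, {p : Conf N k × EE N | p.2 ≠ p.1.val i} := by
    ext p; simp
  rw [this]
  refine isOpen_iInter_of_finite fun i => ?_
  have hc : IsClosed {p : Conf N k × EE N | p.2 = p.1.val i} :=
    isClosed_eq continuous_snd ((continuous_apply i).comp
      (continuous_subtype_val.comp continuous_fst))
  exact hc.isOpen_compl

end Aux

/-- The projection `Conf(ℝ^N, k+1) → Conf(ℝ^N, k)` forgetting the last point is a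
continuous open surjection when `N ≥ 1`, and its fiber over `(x_1,…,x_k)` is
homeomorphic to `ℝ^N` minus the `k` points `x_1,…,x_k`. -/
theorem confProj_continuous_open_surjective_fiber (N k : ℕ) (hN : 1 ≤ N) :
    Continuous (confProj N k) ∧
    IsOpenMap (confProj N k) ∧
    Function.Surjective (confProj N k) ∧
    ∀ c : Conf N k,
      Nonempty
        (({y : Conf N (k + 1) // confProj N k y = c}) ≃ₜ
          ({y : EuclideanSpace ℝ (Fin N) // ∀ i, y ≠ c.val i})) := by
  haveI : Nonempty (Fin N) := ⟨⟨0, hN⟩⟩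
  haveI : Infinite (EE N) := (WithLp.equiv 2 (Fin N → ℝ)).symm.infinite_iff.mp inferInstance
  refine ⟨confProj_cont, ?_, ?_, ?_⟩
  · -- open map
    have hrfl : confProj N k = (Prod.fst ∘ Subtype.val) ∘ (confHomeo N k) := rfl
    rw [hrfl]
    exact (isOpenMap_fst.comp (W_open.isOpenMap_subtype_val)).comp (confHomeo N k).isOpenMap
  · -- surjective
    intro c
    obtain ⟨y, hy⟩ := ((Set.finite_range c.val).infinite_compl).nonempty
    have hy' : ∀ i, y ≠ c.val i := fun i h => hy ⟨i, h.symm⟩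
    refine ⟨⟨Fin.snoc c.val y, snoc_inj c.prop hy'⟩, ?_⟩
    apply Subtype.ext; funext i; simp [confProj]
  · -- fibers
    intro c
    refine ⟨{
      toFun := fun z => ⟨z.val.val (Fin.last k), fun i h => ?_⟩
      invFun := fun y => ⟨⟨Fin.snoc c.val y.val, snoc_inj c.prop y.prop⟩, ?_⟩
      left_inv := fun z => ?_
      right_inv := fun y => ?_
      continuous_toFun := ?_
      continuous_invFun := ?_ }⟩
    · -- z last ≠ c i
      have hcz : c.val i = z.val.val i.castSucc :=
        congrFun (congrArg Subtype.val z.prop.symm) i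
      rw [hcz] at h
      exact (Fin.castSucc_lt_last i).ne' (z.val.prop h)
    · apply Subtype.ext; funext i; simp [confProj]
    · apply Subtype.ext; apply Subtype.ext
      show Fin.snoc c.val (z.val.val (Fin.last k)) = z.val.val
      have hc : c.val = fun i => z.val.val i.castSucc :=
        congrArg Subtype.val z.prop.symm
      rw [hc]
      exact Fin.snoc_init_self z.val.val
    · apply Subtype.ext; simp
    · apply Continuous.subtype_mk
      exact (continuous_apply _).comp (continuous_subtype_val.comp continuous_subtype_val)
    · apply Continuous.subtype_mk
      apply Continuous.subtype_mk
      exact snoc_cont.comp ((continuous_const).prodMk continuous_subtype_val)
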